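/- Let n ≥ 1 and let A_n denote the alternating group of even permutations of Fin n, acting on vectors in Fin n → ℝ by (σ·λ) i = λ (σ⁻¹ i). Let λ, μ : Fin n → ℝ, and let S = {ρ·λ + μ : ρ ∈ A_n}. Assume that any two elements of S lying in the same A_n-orbit are equal (i.e., for all s, s' ∈ S, if τ·s = s' for some τ ∈ A_n then s = s'). Then for every σ₀ ∈ A_n, the number of pairs (σ, τ) ∈ A_n × A_n with σ·λ + τ·μ = σ₀·λ + μ equals |Stab(λ)| · |Stab(σ₀·λ + μ)|, where Stab(v) denotes the stabilizer subgroup {ρ ∈ A_n : ρ·v = v}. In particular, the multiplicity of the orbit O_e(σ₀·λ + μ) in the product O_e(λ) ⊗ O_e(μ) is |Stab(σ₀·λ + μ)|. -/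
import Mathlib


/-- The action of a permutation on vectors: `(σ · v) i = v (σ⁻¹ i)`. -/
def permAct {n : ℕ} (σ : Equiv.Perm (Fin n)) (v : Fin n → ℝ) : Fin n → ℝ :=
  fun i => v (σ⁻¹ i)

lemma permAct_mul {n : ℕ} (σ τ : Equiv.Perm (Fin n)) (v : Fin n → ℝ) :
    permAct (σ * τ) v = permAct σ (permAct τ v) := by
  funext i; simp [permAct, mul_inv_rev]

lemma permAct_add {n : ℕ} (σ : Equiv.Perm (Fin n)) (u v : Fin n → ℝ) :
    permAct σ (u + v) = permAct σ u + permAct σ v := rfl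

lemma permAct_one {n : ℕ} (v : Fin n → ℝ) : permAct (1 : Equiv.Perm (Fin n)) v = v := rfl

/-- Multiplicities in the product of two `Aₙ`-orbits: if any two elements of
`S = {ρ·λ + μ : ρ ∈ Aₙ}` lying in the same `Aₙ`-orbit are equal, then for every
`σ₀ ∈ Aₙ` the number of pairs `(σ, τ)` with `σ·λ + τ·μ = σ₀·λ + μ` equals
`|Stab(λ)| · |Stab(σ₀·λ + μ)|`. -/
theorem orbit_product_multiplicity (n : ℕ) (hn : 1 ≤ n) (lam mu : Fin n → ℝ)
    (hsep : ∀ s ∈ {v : Fin n → ℝ | ∃ ρ : alternatingGroup (Fin n),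
        v = permAct (ρ : Equiv.Perm (Fin n)) lam + mu},
      ∀ s' ∈ {v : Fin n → ℝ | ∃ ρ : alternatingGroup (Fin n),
        v = permAct (ρ : Equiv.Perm (Fin n)) lam + mu},
      (∃ τ : alternatingGroup (Fin n), permAct (τ : Equiv.Perm (Fin n)) s = s') → s = s')
    (σ₀ : alternatingGroup (Fin n)) :
    {p : alternatingGroup (Fin n) × alternatingGroup (Fin n) |
        permAct (p.1 : Equiv.Perm (Fin n)) lam + permAct (p.2 : Equiv.Perm (Fin n)) mu =
          permAct (σ₀ : Equiv.Perm (Fin n)) lam + mu}.ncard =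
      {ρ : alternatingGroup (Fin n) |
          permAct (ρ : Equiv.Perm (Fin n)) lam = lam}.ncard *
      {ρ : alternatingGroup (Fin n) |
          permAct (ρ : Equiv.Perm (Fin n)) (permAct (σ₀ : Equiv.Perm (Fin n)) lam + mu) =
            permAct (σ₀ : Equiv.Perm (Fin n)) lam + mu}.ncard := by
  classical
  set w : Fin n → ℝ := permAct (σ₀ : Equiv.Perm (Fin n)) lam + mu with hwdef
  have key : ∀ σ τ : alternatingGroup (Fin n), (permAct (σ : Equiv.Perm (Fin n)) lam
        + permAct (τ : Equiv.Perm (Fin n)) mu = w) ↔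
      (permAct ((σ₀⁻¹ * τ⁻¹ * σ : alternatingGroup (Fin n)) : Equiv.Perm (Fin n)) lam = lam ∧
        permAct ((τ : alternatingGroup (Fin n)) : Equiv.Perm (Fin n)) w = w) := by
    intro σ τ
    constructor
    · intro h
      set s : Fin n → ℝ := permAct ((τ⁻¹ * σ : alternatingGroup (Fin n)) : Equiv.Perm (Fin n)) lam + mu with hs
      have hsS : s ∈ {v : Fin n → ℝ | ∃ ρ : alternatingGroup (Fin n),
          v = permAct (ρ : Equiv.Perm (Fin n)) lam + mu} := ⟨τ⁻¹ * σ, rfl⟩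
      have hwS : w ∈ {v : Fin n → ℝ | ∃ ρ : alternatingGroup (Fin n),
          v = permAct (ρ : Equiv.Perm (Fin n)) lam + mu} := ⟨σ₀, rfl⟩
      have hcoe : (τ : Equiv.Perm (Fin n)) * ((τ⁻¹ * σ : alternatingGroup (Fin n)) : Equiv.Perm (Fin n))
          = (σ : Equiv.Perm (Fin n)) := by
        push_cast
        group
      have hts : permAct ((τ : alternatingGroup (Fin n)) : Equiv.Perm (Fin n)) s = w := by
        rw [hs, permAct_add, ← permAct_mul, hcoe, h]
      have heq : s = w := hsep s hsS w hwS ⟨τ, hts⟩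
      refine ⟨?_, heq ▸ hts⟩
      have hcancel : permAct ((τ⁻¹ * σ : alternatingGroup (Fin n)) : Equiv.Perm (Fin n)) lam
          = permAct (σ₀ : Equiv.Perm (Fin n)) lam := by
        have := heq
        rw [hs, hwdef] at this
        exact add_right_cancel this
      have hcoe2 : ((σ₀⁻¹ * τ⁻¹ * σ : alternatingGroup (Fin n)) : Equiv.Perm (Fin n))
          = ((σ₀⁻¹ : alternatingGroup (Fin n)) : Equiv.Perm (Fin n)) * ((τ⁻¹ * σ : alternatingGroup (Fin n)) : Equiv.Perm (Fin n)) := by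
        push_cast
        group
      have hcoe3 : ((σ₀⁻¹ : alternatingGroup (Fin n)) : Equiv.Perm (Fin n)) * (σ₀ : Equiv.Perm (Fin n)) = 1 := by
        push_cast
        group
      rw [hcoe2, permAct_mul, hcancel, ← permAct_mul, hcoe3, permAct_one]
    · rintro ⟨h1, h2⟩
      have hcoe : ((τ : alternatingGroup (Fin n)) : Equiv.Perm (Fin n)) * (σ₀ : Equiv.Perm (Fin n))
          * ((σ₀⁻¹ * τ⁻¹ * σ : alternatingGroup (Fin n)) : Equiv.Perm (Fin n)) = (σ : Equiv.Perm (Fin n)) := by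
        push_cast
        group
      have hσ : permAct (σ : Equiv.Perm (Fin n)) lam
          = permAct ((τ : alternatingGroup (Fin n)) : Equiv.Perm (Fin n)) (permAct (σ₀ : Equiv.Perm (Fin n)) lam) := by
        rw [← hcoe, permAct_mul, permAct_mul, h1]
      calc permAct (σ : Equiv.Perm (Fin n)) lam + permAct ((τ : alternatingGroup (Fin n)) : Equiv.Perm (Fin n)) mu
          = permAct ((τ : alternatingGroup (Fin n)) : Equiv.Perm (Fin n)) w := by
            rw [hσ, hwdef, permAct_add]
        _ = w := h2
  set A : Set (alternatingGroup (Fin n)) := {ρ : alternatingGroup (Fin n) | permAct (ρ : Equiv.Perm (Fin n)) lam = lam} with hA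
  set B : Set (alternatingGroup (Fin n)) := {ρ : alternatingGroup (Fin n) | permAct (ρ : Equiv.Perm (Fin n)) w = w} with hB
  set P : Set (alternatingGroup (Fin n) × alternatingGroup (Fin n)) := {p : alternatingGroup (Fin n) × alternatingGroup (Fin n) |
      permAct (p.1 : Equiv.Perm (Fin n)) lam + permAct (p.2 : Equiv.Perm (Fin n)) mu = w}
    with hP
  have e : P ≃ A × B :=
    { toFun := fun p => (⟨σ₀⁻¹ * p.1.2⁻¹ * p.1.1, ((key p.1.1 p.1.2).1 p.2).1⟩,
        ⟨p.1.2, ((key p.1.1 p.1.2).1 p.2).2⟩)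
      invFun := fun q => ⟨(q.2.1 * σ₀ * q.1.1, q.2.1), by
        refine (key (q.2.1 * σ₀ * q.1.1) q.2.1).2 ⟨?_, q.2.2⟩
        have : σ₀⁻¹ * q.2.1⁻¹ * (q.2.1 * σ₀ * q.1.1) = q.1.1 := by group
        rw [this]
        exact q.1.2⟩
      left_inv := fun p => by
        apply Subtype.ext
        apply Prod.ext <;> simp <;> group
      right_inv := fun q => by
        apply Prod.ext <;> apply Subtype.ext <;> simp <;> group }
  show P.ncard = A.ncard * B.ncard
  calc P.ncard = Nat.card P := (Nat.card_coe_set_eq P).symm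
    _ = Nat.card (A × B) := Nat.card_congr e
    _ = Nat.card A * Nat.card B := Nat.card_prod _ _
    _ = A.ncard * B.ncard := by rw [Nat.card_coe_set_eq, Nat.card_coe_set_eq]
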